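/- arXiv:1304.5633 — 2 statements merged into one kernel-verified Lean document; each statement's English description precedes it below -/
import Mathlib

section
/- In the Knödel graph W_{Δ,n} with n even, the set of vertices from which there is an ascending path to the vertex (1,β) equals {(γ, (β+δ) mod n/2) : γ ∈ {1,2}, 0 ≤ δ ≤ 2^{Δ−1} − 1}. -/
/-- A labeled (multi)graph: `m` edges indexed by `Fin m`, each edge being an
unordered pair of vertices (a call), labeled by the time at which the call occurs. -/
structure LabeledGraph (V : Type) where
  m : ℕ
  ends : Fin m → Sym2 V
  label : Fin m → ℕ

namespace LabeledGraph

variable {V : Type}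

lemma pos_right_of_fin {a b : ℕ} (e : Fin (a * b)) : 0 < b := by
  rcases Nat.eq_zero_or_pos b with h | h
  · exact absurd e.isLt (by simp [h])
  · exact h

/-- The maximal label occurring in `G`. -/
def maxLabel (G : LabeledGraph V) : ℕ :=
  Finset.univ.sup fun e => G.label e

/-- `G.IsWalk u v es` : the list of edges `es` forms a walk from `u` to `v`. -/
inductive IsWalk (G : LabeledGraph V) : V → V → List (Fin G.m) → Prop
  | nil (v : V) : IsWalk G v v []
  | cons {u w v : V} {e : Fin G.m} {es : List (Fin G.m)} :
      G.ends e = s(u, w) → IsWalk G w v es → IsWalk G u v (e :: es)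

/-- An ascending path from `u` to `v`: a walk whose labels strictly increase. -/
def IsAscPath (G : LabeledGraph V) (u v : V) (es : List (Fin G.m)) : Prop :=
  G.IsWalk u v es ∧ List.Chain' (· < ·) (es.map G.label)

/-- Number of descents (non-increases) in a list of labels. -/
def descents : List ℕ → ℕ
  | a :: b :: rest => (if b ≤ a then 1 else 0) + descents (b :: rest)
  | _ => 0

/-- An `s`-folded ascending path from `u` to `v`: a walk using `s`-many “folds”,
i.e. a concatenation of `s+1` maximal ascending subpaths. -/
def IsFoldedPath (G : LabeledGraph V) (u v : V) (es : List (Fin G.m)) (s : ℕ) : Prop :=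
  G.IsWalk u v es ∧ es.Nodup ∧ descents (es.map G.label) = s

/-- `G` is a `k`-fault-tolerant gossip graph: after deleting any `≤ k` edges, every
ordered pair of vertices is still joined by an ascending path. -/
def IsFaultTolerant (G : LabeledGraph V) (k : ℕ) : Prop :=
  ∀ F : Finset (Fin G.m), F.card ≤ k →
    ∀ u v : V, ∃ es : List (Fin G.m), G.IsAscPath u v es ∧ ∀ e ∈ es, e ∉ F

/-- Edge sum of two labeled graphs: labels of `G₂` are shifted above those of `G₁`. -/
def edgeSum (G₁ G₂ : LabeledGraph V) : LabeledGraph V where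
  m := G₁.m + G₂.m
  ends := fun e =>
    if hlt : e.val < G₁.m then G₁.ends ⟨e.val, hlt⟩
    else G₂.ends ⟨e.val - G₁.m, by have := e.isLt; omega⟩
  label := fun e =>
    if hlt : e.val < G₁.m then G₁.label ⟨e.val, hlt⟩
    else G₂.label ⟨e.val - G₁.m, by have := e.isLt; omega⟩ + G₁.maxLabel

/-- Edge sum `hG` of `h` identical copies of `G`; the `i`-th copy has labels shifted
up by `i · maxLabel G`. -/
def hCopy (G : LabeledGraph V) (h : ℕ) : LabeledGraph V where
  m := h * G.m
  ends := fun e => G.ends ⟨e.val % G.m, Nat.mod_lt _ (pos_right_of_fin e)⟩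
  label := fun e =>
    G.label ⟨e.val % G.m, Nat.mod_lt _ (pos_right_of_fin e)⟩ + (e.val / G.m) * G.maxLabel

/-- The copy of an edge `e` of `G` in the `i`-th copy inside `hG`. -/
def copyEdge (G : LabeledGraph V) {h : ℕ} (i : Fin h) (e : Fin G.m) : Fin (G.hCopy h).m :=
  ⟨i.val * G.m + e.val, by
    show i.val * G.m + e.val < h * G.m
    calc i.val * G.m + e.val < (i.val + 1) * G.m := by rw [Nat.succ_mul]; omega
    _ ≤ h * G.m := Nat.mul_le_mul_right _ i.isLt⟩

/-- `τ(n,k)`: the minimum number of edges (calls) of a `k`-fault-tolerant gossip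
graph (scheme) on `n` nodes. -/
noncomputable def tau (n k : ℕ) : ℕ :=
  sInf {c | ∃ G : LabeledGraph (Fin n), G.m = c ∧ G.IsFaultTolerant k}

/-- The Knödel graph `W_{Δ,n}` on `n = 2h` vertices: for each `j < h` and each
`l ∈ {1,…,Δ}` an edge labeled `l` between `(1,j)` and `(2, (j + 2^{l-1} - 1) mod h)`
(here `Fin 2` value `0` plays the role of `1`, and `1` the role of `2`). -/
def knodel (Δ h : ℕ) : LabeledGraph (Fin 2 × Fin h) where
  m := Δ * h
  ends := fun e =>
    have hh : 0 < h := pos_right_of_fin e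
    s( ((0 : Fin 2), ⟨e.val % h, Nat.mod_lt _ hh⟩),
       ((1 : Fin 2), ⟨(e.val % h + (2 ^ (e.val / h) - 1)) % h, Nat.mod_lt _ hh⟩) )
  label := fun e => e.val / h + 1

/-- The interval `R((α,β);(γ,δ))` in the Knödel graph on `2h` vertices (it does not
depend on `γ`); vertex class `0` plays the role of `1`, class `1` the role of `2`. -/
def knodelInterval (h : ℕ) (α : Fin 2) (β δ : ℕ) : ℕ :=
  if α = 0 then (if β ≤ δ then δ - β else h - (β - δ))
  else (if δ ≤ β then β - δ else h - (δ - β))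

/-- The labeled wheel graph on `n = 2k+1` vertices: center `none` (vertex `u`),
rim vertices `some (i, 0) = vᵢ` and `some (i, 1) = vᵢ'`; edges `(vᵢ,vᵢ')` labeled 1,
`(vᵢ',u)` labeled 2, `(vᵢ,u)` labeled 3, `(vᵢ', v_{i+1})` labeled 4. -/
def wheel (k : ℕ) : LabeledGraph (Option (Fin k × Fin 2)) where
  m := 4 * k
  ends := fun e =>
    have hk : 0 < k := pos_right_of_fin e
    let i : Fin k := ⟨e.val % k, Nat.mod_lt _ hk⟩
    if e.val / k = 0 then s(some (i, 0), some (i, 1))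
    else if e.val / k = 1 then s(some (i, 1), none)
    else if e.val / k = 2 then s(some (i, 0), none)
    else s(some (i, 1), some (⟨(i.val + 1) % k, Nat.mod_lt _ hk⟩, 0))
  label := fun e => e.val / k + 1

/-- A labeled graph is a valid (timed) schedule when simultaneous calls form a
matching: no two distinct edges with the same label share a vertex. -/
def IsMatchingSchedule (G : LabeledGraph V) : Prop :=
  ∀ e e' : Fin G.m, e ≠ e' → G.label e = G.label e' →
    ∀ v : V, ¬(v ∈ G.ends e ∧ v ∈ G.ends e')

/-- `T(n,k)`: the minimum completion time of a `k`-fault-tolerant gossip scheme on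
`n` nodes in which non-overlapping pairs may call simultaneously. -/
noncomputable def minTime (n k : ℕ) : ℕ :=
  sInf {t | ∃ G : LabeledGraph (Fin n),
    G.IsMatchingSchedule ∧ G.IsFaultTolerant k ∧ G.maxLabel ≤ t}

end LabeledGraph

/-!
Write `R_l(v)` (`ascReach l v`) for the set of vertices from which an ascending path with all
labels at most `l` leads to `v`. Since labels increase along an ascending path, a path counted in
`R_{l+1}(v)` either lies in `R_l(v)` or ends with its unique edge of label `l + 1`. Into `(1,β)`
that edge comes from `(2, β + 2^l - 1)`, and into `(2,β)` from `(1, β - 2^l + 1)`. By induction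
on `l`, `R_{l+1}((1,β))` consists of the vertices of either class at offset `δ ∈ [0, 2^l)` ahead of
`β`, and `R_{l+1}((2,β))` of those at offset `δ ∈ [0, 2^l)` behind `β`: the edge of label `l + 2`
reflects the offsets `[0, 2^l)` of the one set onto the offsets `[2^l, 2^{l+1})` of the other.
The theorem is the case `l + 1 = Δ`, where the label bound is vacuous.
-/

theorem fin_eq_mk_mod_iff {h : ℕ} {a : Fin h} {n : ℕ} (hn : n % h < h) :
    a = ⟨n % h, hn⟩ ↔ (a.val : ZMod h) = n := by
  rw [Fin.ext_iff, ZMod.natCast_eq_natCast_iff', Nat.mod_eq_of_lt a.isLt]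

theorem exists_fin_val_natCast_eq {h : ℕ} [NeZero h] (z : ZMod h) :
    ∃ y : Fin h, (y.val : ZMod h) = z :=
  ⟨⟨z.val, z.val_lt⟩, z.natCast_zmod_val⟩

theorem fin_val_natCast_inj {h : ℕ} {a b : Fin h} : (a.val : ZMod h) = b.val ↔ a = b := by
  rw [ZMod.natCast_eq_natCast_iff', Nat.mod_eq_of_lt a.isLt, Nat.mod_eq_of_lt b.isLt, Fin.val_inj]

/-- The second disjunct says `V = W + (2 ^ (l + 1) - 1 - δ)`: the offsets in `[2 ^ l, 2 ^ (l + 1))`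
are the reflections of those below `2 ^ l`. -/
theorem exists_lt_two_pow_succ_eq_add_iff {R : Type*} [CommRing R] (V W : R) (l : ℕ) :
    (∃ δ : ℕ, δ < 2 ^ (l + 1) ∧ V = W + δ) ↔
      (∃ δ : ℕ, δ < 2 ^ l ∧ V = W + δ) ∨ ∃ δ : ℕ, δ < 2 ^ l ∧ V + δ + 1 = W + 2 ^ (l + 1) := by
  have hpow : 2 ^ (l + 1) = 2 * 2 ^ l := pow_succ' 2 l
  have hreflect : ∀ δ : ℕ, δ < 2 ^ (l + 1) →
      ((2 ^ (l + 1) - 1 - δ : ℕ) : R) + δ + 1 = 2 ^ (l + 1) := fun δ hδ => by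
    exact_mod_cast congrArg (Nat.cast : ℕ → R)
      (by omega : 2 ^ (l + 1) - 1 - δ + δ + 1 = 2 ^ (l + 1))
  constructor
  · rintro ⟨δ, hδ, hV⟩
    by_cases hδl : δ < 2 ^ l
    · exact .inl ⟨δ, hδl, hV⟩
    refine .inr ⟨2 ^ (l + 1) - 1 - δ, by omega, ?_⟩
    linear_combination hV + hreflect δ hδ
  · rintro (⟨δ, hδ, hV⟩ | ⟨δ, hδ, hV⟩)
    · exact ⟨δ, by omega, hV⟩
    refine ⟨2 ^ (l + 1) - 1 - δ, by omega, ?_⟩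
    linear_combination hV - hreflect δ (by omega)

namespace LabeledGraph

variable {V : Type} (G : LabeledGraph V)

def ascReach (l : ℕ) (v : V) : Set V :=
  {u | ∃ es, G.IsAscPath u v es ∧ ∀ e ∈ es, G.label e ≤ l}

variable {G}

theorem isWalk_append_iff {u w : V} {es fs : List (Fin G.m)} :
    G.IsWalk u w (es ++ fs) ↔ ∃ v, G.IsWalk u v es ∧ G.IsWalk v w fs := by
  induction es generalizing u with
  | nil =>
    refine ⟨fun h => ⟨u, .nil u, h⟩, ?_⟩
    rintro ⟨v, ⟨⟩, h⟩
    exact h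
  | cons e es ih =>
    constructor
    · rintro (_ | ⟨he, hrest⟩)
      obtain ⟨v, hes, hfs⟩ := ih.mp hrest
      exact ⟨v, .cons he hes, hfs⟩
    · rintro ⟨v, _ | ⟨he, hes⟩, hfs⟩
      exact .cons he (ih.mpr ⟨v, hes, hfs⟩)

theorem isWalk_singleton_iff {u v : V} {e : Fin G.m} : G.IsWalk u v [e] ↔ G.ends e = s(u, v) := by
  refine ⟨?_, fun he => .cons he (.nil v)⟩
  rintro (_ | ⟨he, ⟨⟩⟩)
  exact he

theorem isAscPath_iff_pairwise {u v : V} {es : List (Fin G.m)} :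
    G.IsAscPath u v es ↔ G.IsWalk u v es ∧ (es.map G.label).Pairwise (· < ·) :=
  and_congr_right' List.isChain_iff_pairwise

theorem isAscPath_concat_iff {u v : V} {es : List (Fin G.m)} {e : Fin G.m} :
    G.IsAscPath u v (es ++ [e]) ↔
      ∃ w, G.IsAscPath u w es ∧ (∀ e' ∈ es, G.label e' < G.label e) ∧ G.ends e = s(w, v) := by
  simp only [isAscPath_iff_pairwise, isWalk_append_iff, isWalk_singleton_iff, List.map_append,
    List.pairwise_append, List.map_cons, List.map_nil,
    List.pairwise_singleton, List.mem_map, List.mem_singleton, true_and]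
  grind

theorem mem_ascReach_succ {l : ℕ} {u v : V} :
    u ∈ G.ascReach (l + 1) v ↔
      u ∈ G.ascReach l v ∨ ∃ e w, G.label e = l + 1 ∧ G.ends e = s(w, v) ∧ u ∈ G.ascReach l w := by
  constructor
  · rintro ⟨es, hpath, hle⟩
    rcases es.eq_nil_or_concat' with rfl | ⟨es, e, rfl⟩
    · exact .inl ⟨[], hpath, by simp⟩
    obtain ⟨w, hpath', hlt, hend⟩ := isAscPath_concat_iff.mp hpath
    rw [List.forall_mem_append, List.forall_mem_singleton] at hle
    have hle' : ∀ e' ∈ es, G.label e' ≤ l := fun e' he' => by have := hlt e' he'; omega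
    by_cases he : G.label e ≤ l
    · exact .inl ⟨_, hpath, List.forall_mem_append.mpr ⟨hle', List.forall_mem_singleton.mpr he⟩⟩
    · exact .inr ⟨e, w, by omega, hend, es, hpath', hle'⟩
  · rintro (⟨es, hpath, hle⟩ | ⟨e, w, hl, hend, es, hpath, hle⟩)
    · exact ⟨es, hpath, fun e he => (hle e he).trans l.le_succ⟩
    · refine ⟨es ++ [e], isAscPath_concat_iff.mpr ⟨w, hpath, fun e' he' => ?_, hend⟩,
        List.forall_mem_append.mpr
          ⟨fun e' he' => (hle e' he').trans l.le_succ, List.forall_mem_singleton.mpr hl.le⟩⟩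
      have := hle e' he'
      omega

theorem ascReach_zero (hpos : ∀ e, 0 < G.label e) (v : V) : G.ascReach 0 v = {v} := by
  ext u
  refine ⟨?_, ?_⟩
  · rintro ⟨_ | ⟨e, es⟩, ⟨hwalk, -⟩, hle⟩
    · cases hwalk
      rfl
    · exact absurd (hle e (by simp)) (hpos e).not_ge
  · rintro rfl
    exact ⟨[], ⟨.nil u, List.isChain_nil⟩, by simp⟩

theorem ascReach_eq_of_forall_label_le {l : ℕ} (hl : ∀ e, G.label e ≤ l) (v : V) :
    G.ascReach l v = {u | ∃ es, G.IsAscPath u v es} :=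
  Set.ext fun _ =>
    ⟨fun ⟨es, hpath, _⟩ => ⟨es, hpath⟩, fun ⟨es, hpath⟩ => ⟨es, hpath, fun e _ => hl e⟩⟩

section Knodel

variable {Δ h : ℕ}

theorem knodel_label (e : Fin (knodel Δ h).m) : (knodel Δ h).label e = e.val / h + 1 := rfl

theorem knodel_label_pos (e : Fin (knodel Δ h).m) : 0 < (knodel Δ h).label e :=
  Nat.succ_pos _

theorem knodel_label_le (e : Fin (knodel Δ h).m) : (knodel Δ h).label e ≤ Δ := by
  have hh : 0 < h := pos_right_of_fin e
  have : e.val / h < Δ := (Nat.div_lt_iff_lt_mul hh).mpr e.isLt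
  rw [knodel_label]
  omega

theorem knodel_ends_eq (e : Fin (knodel Δ h).m) :
    ∃ x y : Fin h, (knodel Δ h).ends e = s((0, x), (1, y)) ∧
      (y.val : ZMod h) + 1 = x.val + 2 ^ (e.val / h) := by
  refine ⟨_, _, rfl, ?_⟩
  simp only [ZMod.natCast_mod, Nat.cast_add, Nat.cast_sub Nat.one_le_two_pow, Nat.cast_pow,
    Nat.cast_ofNat, Nat.cast_one]
  ring

theorem exists_knodel_edge [NeZero h] {a : ℕ} (ha : a < Δ) (x y : Fin h)
    (hxy : (y.val : ZMod h) + 1 = x.val + 2 ^ a) :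
    ∃ e, (knodel Δ h).label e = a + 1 ∧ (knodel Δ h).ends e = s((0, x), (1, y)) := by
  have hh : 0 < h := Nat.pos_of_neZero h
  have hdiv : (a * h + x.val) / h = a := by
    rw [Nat.mul_comm, Nat.mul_add_div hh, Nat.div_eq_of_lt x.isLt, Nat.add_zero]
  have hmod : (a * h + x.val) % h = x.val := by
    rw [Nat.mul_comm, Nat.mul_add_mod, Nat.mod_eq_of_lt x.isLt]
  have hlt : a * h + x.val < Δ * h := by
    calc a * h + x.val < (a + 1) * h := by rw [Nat.succ_mul]; omega
      _ ≤ Δ * h := Nat.mul_le_mul_right _ ha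
  refine ⟨⟨a * h + x.val, hlt⟩, by rw [knodel_label, hdiv], ?_⟩
  have hy : y = ⟨(x.val + (2 ^ a - 1)) % h, Nat.mod_lt _ hh⟩ := by
    rw [fin_eq_mk_mod_iff]
    push_cast [Nat.cast_sub Nat.one_le_two_pow]
    linear_combination hxy
  rw [hy]
  show s(_, _) = _
  congr 2 <;> ext <;> simp only [hdiv, hmod]

variable [NeZero h] {l : ℕ}

theorem mem_knodel_ascReach_succ_zero (hl : l < Δ) {u : Fin 2 × Fin h} {β : Fin h} :
    u ∈ (knodel Δ h).ascReach (l + 1) (0, β) ↔ u ∈ (knodel Δ h).ascReach l (0, β) ∨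
      ∃ y : Fin h, (y.val : ZMod h) + 1 = β.val + 2 ^ l ∧
        u ∈ (knodel Δ h).ascReach l (1, y) := by
  rw [mem_ascReach_succ]
  refine or_congr_right ⟨?_, ?_⟩
  · rintro ⟨e, w, he, hends, hu⟩
    obtain ⟨x, y, hends', hxy⟩ := knodel_ends_eq e
    rw [hends', Sym2.eq_iff] at hends
    obtain ⟨-, h10⟩ | ⟨hx, rfl⟩ := hends
    · simp at h10
    · obtain rfl : x = β := (Prod.mk.inj hx).2
      rw [knodel_label] at he
      exact ⟨y, by rwa [← Nat.succ_inj.mp he], hu⟩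
  · rintro ⟨y, hy, hu⟩
    obtain ⟨e, he, hends⟩ := exists_knodel_edge hl β y hy
    exact ⟨e, (1, y), he, hends.trans Sym2.eq_swap, hu⟩

theorem mem_knodel_ascReach_succ_one (hl : l < Δ) {u : Fin 2 × Fin h} {β : Fin h} :
    u ∈ (knodel Δ h).ascReach (l + 1) (1, β) ↔ u ∈ (knodel Δ h).ascReach l (1, β) ∨
      ∃ x : Fin h, (β.val : ZMod h) + 1 = x.val + 2 ^ l ∧
        u ∈ (knodel Δ h).ascReach l (0, x) := by
  rw [mem_ascReach_succ]
  refine or_congr_right ⟨?_, ?_⟩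
  · rintro ⟨e, w, he, hends, hu⟩
    obtain ⟨x, y, hends', hxy⟩ := knodel_ends_eq e
    rw [hends', Sym2.eq_iff] at hends
    obtain ⟨rfl, hy⟩ | ⟨h01, -⟩ := hends
    · obtain rfl : y = β := (Prod.mk.inj hy).2
      rw [knodel_label] at he
      exact ⟨x, by rwa [← Nat.succ_inj.mp he], hu⟩
    · simp at h01
  · rintro ⟨x, hx, hu⟩
    obtain ⟨e, he, hends⟩ := exists_knodel_edge hl x β hx
    exact ⟨e, (0, x), he, hends, hu⟩

theorem mem_knodel_ascReach_iff (hl : l < Δ) (u : Fin 2 × Fin h) (β : Fin h) :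
    (u ∈ (knodel Δ h).ascReach (l + 1) (0, β) ↔
      ∃ δ : ℕ, δ < 2 ^ l ∧ (u.2.val : ZMod h) = β.val + δ) ∧
    (u ∈ (knodel Δ h).ascReach (l + 1) (1, β) ↔
      ∃ δ : ℕ, δ < 2 ^ l ∧ (β.val : ZMod h) = u.2.val + δ) := by
  induction l generalizing u β with
  | zero =>
    simp only [mem_knodel_ascReach_succ_zero hl, mem_knodel_ascReach_succ_one hl,
      ascReach_zero knodel_label_pos, pow_zero, Nat.lt_one_iff, exists_eq_left, Nat.cast_zero,
      add_zero, add_left_inj, fin_val_natCast_inj, Set.mem_singleton_iff]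
    obtain ⟨γ, x⟩ := u
    fin_cases γ <;> simp [eq_comm]
  | succ l ih =>
    have ih0 := fun u β => (ih (by omega) u β).1
    have ih1 := fun u β => (ih (by omega) u β).2
    simp only [mem_knodel_ascReach_succ_zero hl, mem_knodel_ascReach_succ_one hl, ih0, ih1,
      exists_lt_two_pow_succ_eq_add_iff]
    constructor
    · refine or_congr_right ⟨?_, ?_⟩
      · rintro ⟨y, hy, δ, hδ, hyδ⟩
        exact ⟨δ, hδ, by linear_combination hy - hyδ⟩
      · rintro ⟨δ, hδ, hδβ⟩
        obtain ⟨y, hy⟩ := exists_fin_val_natCast_eq ((u.2.val : ZMod h) + (δ : ZMod h))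
        exact ⟨y, by rw [hy, hδβ], δ, hδ, hy⟩
    · refine or_congr_right ⟨?_, ?_⟩
      · rintro ⟨x, hx, δ, hδ, hxδ⟩
        exact ⟨δ, hδ, by linear_combination hx - hxδ⟩
      · rintro ⟨δ, hδ, hδβ⟩
        obtain ⟨x, hx⟩ := exists_fin_val_natCast_eq ((u.2.val : ZMod h) - (δ : ZMod h))
        exact ⟨x, by linear_combination hδβ - hx, δ, hδ, by rw [hx, sub_add_cancel]⟩

end Knodel

end LabeledGraph

open LabeledGraph in
/-- In `W_{Δ,n}` (`n = 2h` even), the set of vertices admitting an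
ascending path to `(1,β)` equals `{(γ, (β+δ) mod h) : γ ∈ {1,2}, 0 ≤ δ ≤ 2^{Δ−1}−1}`. -/
theorem knodel_reach_set_one (Δ h : ℕ) (hΔ : 1 ≤ Δ) (hh : 0 < h) (β : Fin h) :
    {w : Fin 2 × Fin h |
        ∃ es : List (Fin (knodel Δ h).m),
          (knodel Δ h).IsAscPath w ((0 : Fin 2), β) es}
      = {w : Fin 2 × Fin h | ∃ (γ : Fin 2) (δ : ℕ), δ ≤ 2 ^ (Δ - 1) - 1 ∧
          w = (γ, ⟨(β.val + δ) % h, Nat.mod_lt _ hh⟩)} := by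
  have : NeZero h := ⟨hh.ne'⟩
  obtain ⟨l, rfl⟩ : ∃ l, Δ = l + 1 := ⟨Δ - 1, by omega⟩
  rw [← ascReach_eq_of_forall_label_le knodel_label_le]
  ext w
  simp only [(mem_knodel_ascReach_iff l.lt_succ_self w β).1, Nat.add_sub_cancel,
    Prod.ext_iff, fin_eq_mk_mod_iff, Nat.cast_add]
  have := @Nat.one_le_two_pow l
  exact ⟨fun ⟨δ, hδ, hw⟩ => ⟨w.1, δ, by omega, rfl, hw⟩,
    fun ⟨_, δ, hδ, _, hw⟩ => ⟨δ, by omega, hw⟩⟩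
end

section
/- If a k-fault-tolerant gossip graph on n vertices exists with τ(n−1,k) + 2(k+1) edges whenever one on n−1 vertices exists with τ(n−1,k) edges, i.e., τ(n,k) ≤ τ(n−1,k) + 2(k+1) for all n ≥ 2 and k ≥ 0. -/
/-!
A new vertex `v` is attached to an old vertex `w` by `k + 1` calls placed before all calls of a
`k`-fault-tolerant scheme on the old vertices and `k + 1` calls placed after them. At most `k`
calls fail, so some call `v – w` survives on each side, and together with the surviving ascending
paths of the old scheme (which lose at most `k` calls) it joins `v` to and from every old vertex.
-/

namespace LabeledGraph

variable {V W : Type}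

lemma IsWalk.append {G : LabeledGraph V} {u w v : V} {l₁ l₂ : List (Fin G.m)}
    (h₁ : G.IsWalk u w l₁) (h₂ : G.IsWalk w v l₂) : G.IsWalk u v (l₁ ++ l₂) := by
  induction h₁ with
  | nil => exact h₂
  | cons he _ ih => exact .cons he (ih h₂)

lemma isAscPath_nil (G : LabeledGraph V) (v : V) : G.IsAscPath v v [] :=
  ⟨.nil v, List.isChain_nil⟩

lemma isAscPath_singleton {G : LabeledGraph V} {u v : V} {e : Fin G.m}
    (he : G.ends e = s(u, v)) : G.IsAscPath u v [e] :=
  ⟨.cons he (.nil v), List.isChain_singleton _⟩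

lemma IsAscPath.append {G : LabeledGraph V} {u w v : V} {l₁ l₂ : List (Fin G.m)}
    (h₁ : G.IsAscPath u w l₁) (h₂ : G.IsAscPath w v l₂)
    (hlt : ∀ a ∈ l₁, ∀ b ∈ l₂, G.label a < G.label b) : G.IsAscPath u v (l₁ ++ l₂) := by
  refine ⟨h₁.1.append h₂.1, ?_⟩
  rw [List.map_append]
  refine h₁.2.append h₂.2 fun x hx y hy => ?_
  obtain ⟨a, ha, rfl⟩ := List.mem_map.1 (List.mem_of_mem_getLast? hx)
  obtain ⟨b, hb, rfl⟩ := List.mem_map.1 (List.mem_of_mem_head? hy)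
  exact hlt a ha b hb

lemma label_le_maxLabel (G : LabeledGraph V) (e : Fin G.m) : G.label e ≤ G.maxLabel :=
  Finset.le_sup (f := G.label) (Finset.mem_univ e)

def mapVert (f : V → W) (G : LabeledGraph V) : LabeledGraph W where
  m := G.m
  ends e := (G.ends e).map f
  label := G.label

lemma IsWalk.mapVert (f : V → W) {G : LabeledGraph V} {u v : V} {es : List (Fin G.m)}
    (h : G.IsWalk u v es) : (G.mapVert f).IsWalk (f u) (f v) es := by
  induction h with
  | nil v => exact .nil (f v)
  | cons he _ ih => exact .cons (by simp [LabeledGraph.mapVert, he]) ih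

lemma IsFaultTolerant.mapVert {f : V → W} (hf : Function.Surjective f) {G : LabeledGraph V}
    {k : ℕ} (hG : G.IsFaultTolerant k) : (G.mapVert f).IsFaultTolerant k := by
  intro F hF u v
  obtain ⟨u, rfl⟩ := hf u
  obtain ⟨v, rfl⟩ := hf v
  obtain ⟨es, ⟨hwalk, hchain⟩, hes⟩ := hG F hF u v
  exact ⟨es, ⟨hwalk.mapVert f, hchain⟩, hes⟩

def empty (V : Type) : LabeledGraph V := ⟨0, Fin.elim0, Fin.elim0⟩

lemma isFaultTolerant_empty [Subsingleton V] (k : ℕ) : (empty V).IsFaultTolerant k :=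
  fun _ _ u v => ⟨[], Subsingleton.elim u v ▸ isAscPath_nil _ u, by simp⟩

lemma exists_notMem_of_card_le {α : Type*} {k : ℕ} (F : Finset α) (hF : F.card ≤ k)
    {f : Fin (k + 1) → α} (hf : Function.Injective f) : ∃ i, f i ∉ F := by
  obtain ⟨_, hmem, hnot⟩ := Finset.exists_mem_notMem_of_card_lt_card
    (s := F) (t := Finset.univ.map ⟨f, hf⟩) (by simpa using Nat.lt_succ_of_le hF)
  obtain ⟨i, -, rfl⟩ := Finset.mem_map.1 hmem
  exact ⟨i, hnot⟩

section AddPendant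

/-- The labels of `G` are raised by one so that the calls `none – some w` labeled `0` come
strictly before them. -/
def addPendant (G : LabeledGraph V) (k : ℕ) (w : V) : LabeledGraph (Option V) where
  m := G.m + 2 * (k + 1)
  ends e :=
    if h₀ : e.val < k + 1 then s(none, some w)
    else if h : e.val < k + 1 + G.m then (G.ends ⟨e.val - (k + 1), by omega⟩).map some
    else s(none, some w)
  label e :=
    if h₀ : e.val < k + 1 then 0
    else if h : e.val < k + 1 + G.m then G.label ⟨e.val - (k + 1), by omega⟩ + 1
    else G.maxLabel + 2

variable (G : LabeledGraph V) (k : ℕ) (w : V)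

def beforeEdge (i : Fin (k + 1)) : Fin (G.addPendant k w).m :=
  ⟨i, by have := i.isLt; simp only [addPendant]; omega⟩

def liftEdge (e : Fin G.m) : Fin (G.addPendant k w).m :=
  ⟨k + 1 + e, by have := e.isLt; simp only [addPendant]; omega⟩

def afterEdge (i : Fin (k + 1)) : Fin (G.addPendant k w).m :=
  ⟨k + 1 + G.m + i, by have := i.isLt; simp only [addPendant]; omega⟩

variable {G k w}

lemma beforeEdge_injective : Function.Injective (G.beforeEdge k w) :=
  fun _ _ h => Fin.ext (congrArg Fin.val h :)

lemma liftEdge_injective : Function.Injective (G.liftEdge k w) :=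
  fun e f h => Fin.ext (by have := congrArg Fin.val h; simp only [liftEdge] at this; omega)

lemma afterEdge_injective : Function.Injective (G.afterEdge k w) :=
  fun i j h => Fin.ext (by have := congrArg Fin.val h; simp only [afterEdge] at this; omega)

lemma ends_beforeEdge (i : Fin (k + 1)) :
    (G.addPendant k w).ends (G.beforeEdge k w i) = s(none, some w) :=
  dif_pos i.isLt

lemma label_beforeEdge (i : Fin (k + 1)) : (G.addPendant k w).label (G.beforeEdge k w i) = 0 :=
  dif_pos i.isLt

lemma ends_liftEdge (e : Fin G.m) :
    (G.addPendant k w).ends (G.liftEdge k w e) = (G.ends e).map some := by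
  have := e.isLt
  simp only [addPendant, liftEdge]
  rw [dif_neg (by omega), dif_pos (by omega)]
  simp

lemma label_liftEdge (e : Fin G.m) :
    (G.addPendant k w).label (G.liftEdge k w e) = G.label e + 1 := by
  have := e.isLt
  simp only [addPendant, liftEdge]
  rw [dif_neg (by omega), dif_pos (by omega)]
  simp

lemma ends_afterEdge (i : Fin (k + 1)) :
    (G.addPendant k w).ends (G.afterEdge k w i) = s(some w, none) := by
  simp only [addPendant, afterEdge]
  rw [dif_neg (by omega), dif_neg (by omega), Sym2.eq_swap]

lemma label_afterEdge (i : Fin (k + 1)) :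
    (G.addPendant k w).label (G.afterEdge k w i) = G.maxLabel + 2 := by
  simp only [addPendant, afterEdge]
  rw [dif_neg (by omega), dif_neg (by omega)]

lemma IsWalk.liftEdge {u v : V} {es : List (Fin G.m)} (h : G.IsWalk u v es) :
    (G.addPendant k w).IsWalk (some u) (some v) (es.map (G.liftEdge k w)) := by
  induction h with
  | nil v => exact .nil _
  | cons he _ ih => exact .cons (by rw [ends_liftEdge, he, Sym2.map_mk]) ih

lemma IsAscPath.liftEdge {u v : V} {es : List (Fin G.m)} (h : G.IsAscPath u v es) :
    (G.addPendant k w).IsAscPath (some u) (some v) (es.map (G.liftEdge k w)) := by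
  refine ⟨h.1.liftEdge, ?_⟩
  have hchain : (es.map G.label).IsChain (· < ·) := h.2
  show List.IsChain _ _
  simp only [List.isChain_map, List.map_map, Function.comp_def, label_liftEdge] at hchain ⊢
  exact hchain.imp fun _ _ => Nat.succ_lt_succ

theorem IsFaultTolerant.addPendant (hG : G.IsFaultTolerant k) :
    (G.addPendant k w).IsFaultTolerant k := by
  intro F hF u v
  obtain ⟨i, hi⟩ := exists_notMem_of_card_le F hF beforeEdge_injective
  obtain ⟨j, hj⟩ := exists_notMem_of_card_le F hF afterEdge_injective
  have hlifted : ∀ a b : V, ∃ es : List (Fin G.m),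
      (G.addPendant k w).IsAscPath (some a) (some b) (es.map (G.liftEdge k w)) ∧
        ∀ e ∈ es, G.liftEdge k w e ∉ F := by
    intro a b
    have hF' : (F.preimage _ liftEdge_injective.injOn).card ≤ k :=
      (Finset.card_le_card_of_injOn _ (fun e he => Finset.mem_preimage.1 he)
        liftEdge_injective.injOn).trans hF
    obtain ⟨es, hpath, hes⟩ := hG _ hF' a b
    exact ⟨es, hpath.liftEdge, fun e he hmem => hes e he (Finset.mem_preimage.2 hmem)⟩
  have hlabel_pos (e : Fin G.m) : 0 < (G.addPendant k w).label (G.liftEdge k w e) := by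
    simp [label_liftEdge]
  have hlabel_lt (e : Fin G.m) :
      (G.addPendant k w).label (G.liftEdge k w e) < G.maxLabel + 2 := by
    simpa [label_liftEdge] using G.label_le_maxLabel e
  cases u with
  | none =>
    cases v with
    | none => exact ⟨[], isAscPath_nil _ none, by simp⟩
    | some b =>
      obtain ⟨es, hpath, hes⟩ := hlifted w b
      refine ⟨[G.beforeEdge k w i] ++ es.map (G.liftEdge k w),
        (isAscPath_singleton (ends_beforeEdge i)).append hpath ?_, by simpa [hi] using hes⟩
      simp [label_beforeEdge, hlabel_pos]
  | some a =>
    cases v with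
    | none =>
      obtain ⟨es, hpath, hes⟩ := hlifted a w
      refine ⟨es.map (G.liftEdge k w) ++ [G.afterEdge k w j],
        hpath.append (isAscPath_singleton (ends_afterEdge j)) ?_,
        List.forall_mem_append.2 ⟨List.forall_mem_map.2 hes, by simpa using hj⟩⟩
      simp [label_afterEdge, hlabel_lt]
    | some b =>
      obtain ⟨es, hpath, hes⟩ := hlifted a b
      exact ⟨_, hpath, by simpa using hes⟩

end AddPendant

lemma exists_isFaultTolerant_succ {p k : ℕ} {G : LabeledGraph (Fin p)}
    (hG : G.IsFaultTolerant k) (w : Fin p) :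
    ∃ G' : LabeledGraph (Fin (p + 1)), G'.m = G.m + 2 * (k + 1) ∧ G'.IsFaultTolerant k :=
  ⟨(G.addPendant k w).mapVert (finSuccEquiv p).symm, rfl,
    hG.addPendant.mapVert (finSuccEquiv p).symm.surjective⟩

lemma exists_isFaultTolerant (k : ℕ) {n : ℕ} (hn : 0 < n) :
    ∃ G : LabeledGraph (Fin n), G.IsFaultTolerant k := by
  induction n with
  | zero => omega
  | succ p ih =>
    rcases Nat.eq_zero_or_pos p with rfl | hp
    · exact ⟨empty (Fin 1), isFaultTolerant_empty (V := Fin 1) k⟩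
    · obtain ⟨G, hG⟩ := ih hp
      obtain ⟨G', -, hG'⟩ := exists_isFaultTolerant_succ hG ⟨0, hp⟩
      exact ⟨G', hG'⟩

lemma tau_le {n k : ℕ} {G : LabeledGraph (Fin n)} (hG : G.IsFaultTolerant k) : tau n k ≤ G.m :=
  Nat.sInf_le ⟨G, rfl, hG⟩

lemma exists_isFaultTolerant_card_eq_tau {n k : ℕ} (hn : 0 < n) :
    ∃ G : LabeledGraph (Fin n), G.m = tau n k ∧ G.IsFaultTolerant k := by
  obtain ⟨G, hG⟩ := exists_isFaultTolerant k hn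
  exact Nat.sInf_mem (s := {c | ∃ G : LabeledGraph (Fin n), G.m = c ∧ G.IsFaultTolerant k})
    ⟨G.m, G, rfl, hG⟩

end LabeledGraph

open LabeledGraph in
/-- `τ(n,k) ≤ τ(n−1,k) + 2(k+1)` for all `n ≥ 2` and `k ≥ 0`. -/
theorem tau_succ_le (n k : ℕ) (hn : 2 ≤ n) :
    tau n k ≤ tau (n - 1) k + 2 * (k + 1) := by
  obtain ⟨p, rfl⟩ : ∃ p, n = p + 1 := ⟨n - 1, by omega⟩
  have hp : 0 < p := by omega
  obtain ⟨G, hGm, hG⟩ := exists_isFaultTolerant_card_eq_tau (k := k) hp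
  obtain ⟨G', hG'm, hG'⟩ := exists_isFaultTolerant_succ hG ⟨0, hp⟩
  calc tau (p + 1) k ≤ G'.m := tau_le hG'
    _ = tau (p + 1 - 1) k + 2 * (k + 1) := by rw [hG'm, hGm, Nat.add_sub_cancel]
end
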